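/- arXiv:2007.10874 — 2 statements merged into one kernel-verified Lean document; each statement's English description precedes it below -/
import Mathlib

section
/- Let X = (X_t)_{t in Z^m} be a real-valued random field. Then for every h in N, the theta-lex coefficient theta(h) equals the mixingale-type coefficient theta_h, i.e. sup_{u in N} theta_u(h) = sup_{j in Z^m} sup_{g in L_1} || E[g(X_j) | sigma(X_k : k in V_j^h)] - E[g(X_j)] ||_{L^1}. -/
open MeasureTheory Filter Topology

noncomputable section

/-- Covariance of two real-valued random variables. -/
def cov {Ω : Type*} [MeasurableSpace Ω] (P : Measure Ω) (f g : Ω → ℝ) : ℝ :=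
  (∫ ω, f ω * g ω ∂P) - (∫ ω, f ω ∂P) * (∫ ω, g ω ∂P)

/-- Strict lexicographic order on `ℤ^m`. -/
def lexLt {m : ℕ} (y z : Fin m → ℤ) : Prop :=
  ∃ p : Fin m, (∀ q, q < p → y q = z q) ∧ y p < z p

/-- Lexicographic order (non-strict) on `ℤ^m`. -/
def lexLe {m : ℕ} (y z : Fin m → ℤ) : Prop := lexLt y z ∨ y = z

/-- The set `V_j^h = {s : s ≤_lex j and ‖j - s‖_∞ ≥ h}`; the norm on `Fin m → ℤ` is
the sup norm. -/
def VSet {m : ℕ} (j : Fin m → ℤ) (h : ℝ) : Set (Fin m → ℤ) :=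
  {s | lexLe s j ∧ h ≤ ‖j - s‖}

/-- The σ-algebra generated by the random variables `X s`, `s ∈ S`. -/
def sigmaOn {Ω : Type*} [MeasurableSpace Ω] {I : Type*} (X : I → Ω → ℝ) (S : Set I) :
    MeasurableSpace Ω :=
  ⨆ s ∈ S, MeasurableSpace.comap (X s) inferInstance

/-- The θ-lex coefficient `θ(h) = sup_u θ_u(h)` of a random field on `ℤ^m`: the
supremum of `|Cov(F(X_Γ), G(X_j))| / (‖F‖_∞ Lip(G))` over all `u`, all `Γ ⊆ V_j^h`
with `|Γ| = u`, all bounded measurable `F` and all bounded Lipschitz `G` (equivalently,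
over all valid bounds `MF` on `F` and Lipschitz constants `LG` of `G`). -/
def thetaCoeff {Ω : Type*} [MeasurableSpace Ω] (P : Measure Ω) {m : ℕ}
    (X : (Fin m → ℤ) → Ω → ℝ) (h : ℝ) : ℝ :=
  sSup {r | ∃ (u : ℕ) (j : Fin m → ℤ) (Γ : Fin u → (Fin m → ℤ)) (F : (Fin u → ℝ) → ℝ)
    (G : ℝ → ℝ) (MF LG : ℝ),
    Function.Injective Γ ∧ (∀ i, Γ i ∈ VSet j h) ∧
    Measurable F ∧ (∀ x, |F x| ≤ MF) ∧
    Measurable G ∧ (∃ MG, ∀ x, |G x| ≤ MG) ∧ (∀ x y, |G x - G y| ≤ LG * |x - y|) ∧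
    0 < MF ∧ 0 < LG ∧
    r = |cov P (fun ω => F (fun i => X (Γ i) ω)) (fun ω => G (X j ω))| / (MF * LG)}

/-- The mixingale-type coefficient
`θ_h = sup_{j} sup_{g ∈ Λ₁} ‖E[g(X_j) | σ(X_k : k ∈ V_j^h)] - E[g(X_j)]‖_{L¹}`, where
`Λ₁` is the class of bounded Lipschitz functions `g : ℝ → ℝ` with `Lip(g) ≤ 1`. -/
def thetaMix {Ω : Type*} [MeasurableSpace Ω] (P : Measure Ω) {m : ℕ}
    (X : (Fin m → ℤ) → Ω → ℝ) (h : ℝ) : ℝ :=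
  sSup {r | ∃ (j : Fin m → ℤ) (g : ℝ → ℝ),
    (∀ x y, |g x - g y| ≤ |x - y|) ∧ (∃ M, ∀ x, |g x| ≤ M) ∧
    r = ∫ ω, |MeasureTheory.condExp (sigmaOn X (VSet j h)) P
          (fun ω' => g (X j ω')) ω - ∫ ω', g (X j ω') ∂P| ∂P}

/-!
With `𝒢 = σ(X_k : k ∈ V_j^h)` and `Y = G(X_j)`, pulling the bounded `𝒢`-measurable factor out of
the conditional expectation gives `Cov(F(X_Γ), Y) = 𝔼[F(X_Γ) (𝔼[Y|𝒢] - 𝔼Y)]`, hence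
`|Cov(F(X_Γ), Y)| ≤ ‖F‖_∞ ‖𝔼[Y|𝒢] - 𝔼Y‖₁`; dividing `G` by its Lipschitz constant gives
`θ(h) ≤ θ_h`. Conversely, for finite `Γ` the choice `F = sign(𝔼[Y|X_Γ] - 𝔼Y)` turns the covariance
into `‖𝔼[Y|X_Γ] - 𝔼Y‖₁`, and by Lévy's upward theorem along an enumeration of the countable set
`V_j^h` these norms approach `‖𝔼[Y|𝒢] - 𝔼Y‖₁`.
-/

def condExpDeviation {Ω : Type*} {mΩ : MeasurableSpace Ω} (P : Measure Ω) (m : MeasurableSpace Ω)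
    (Y : Ω → ℝ) : ℝ :=
  ∫ ω, |P[Y|m] ω - ∫ ω', Y ω' ∂P| ∂P

lemma Real.sSup_eq_sSup_of_forall_exists_le_of_forall_exists_sub_le {A B : Set ℝ}
    (hAB : ∀ a ∈ A, ∃ b ∈ B, a ≤ b) (hBA : ∀ b ∈ B, ∀ ε > 0, ∃ a ∈ A, b - ε ≤ a) :
    sSup A = sSup B := by
  rcases A.eq_empty_or_nonempty with rfl | hA
  · have hB : B = ∅ := Set.eq_empty_of_forall_notMem fun b hb => by
      simpa using hBA b hb 1 one_pos
    rw [hB]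
  obtain ⟨b₀, hb₀, -⟩ := hAB _ hA.some_mem
  by_cases hBbdd : BddAbove B
  · have hAbdd : BddAbove A := ⟨sSup B, fun a ha => by
      obtain ⟨b, hb, hab⟩ := hAB a ha
      exact hab.trans (le_csSup hBbdd hb)⟩
    refine le_antisymm (csSup_le hA fun a ha => ?_) (csSup_le ⟨b₀, hb₀⟩ fun b hb => ?_)
    · obtain ⟨b, hb, hab⟩ := hAB a ha
      exact hab.trans (le_csSup hBbdd hb)
    · refine le_of_forall_pos_le_add fun ε hε => ?_
      obtain ⟨a, ha, hba⟩ := hBA b hb ε hε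
      linarith [le_csSup hAbdd ha]
  · have hAbdd : ¬BddAbove A := fun ⟨M, hM⟩ => hBbdd ⟨M + 1, fun b hb => by
      obtain ⟨a, ha, hba⟩ := hBA b hb 1 one_pos
      linarith [hM ha]⟩
    rw [Real.sSup_of_not_bddAbove hAbdd, Real.sSup_of_not_bddAbove hBbdd]

section Covariance

variable {Ω : Type*} {m m₁ m₂ mΩ : MeasurableSpace Ω} {P : Measure Ω}

lemma cov_const_mul_right (f Y : Ω → ℝ) (c : ℝ) :
    cov P f (fun ω => c * Y ω) = c * cov P f Y := by
  simp only [cov, mul_left_comm _ c, integral_const_mul]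
  ring

variable [IsFiniteMeasure P]

lemma cov_eq_integral_mul_condExp_sub (hm : m ≤ mΩ) {f Y : Ω → ℝ}
    (hf : StronglyMeasurable[m] f) {M : ℝ} (hfM : ∀ ω, |f ω| ≤ M) (hY : Integrable Y P) :
    cov P f Y = ∫ ω, f ω * (P[Y|m] ω - ∫ ω', Y ω' ∂P) ∂P := by
  have hfM' : ∀ᵐ ω ∂P, ‖f ω‖ ≤ M := ae_of_all _ hfM
  have hf' : AEStronglyMeasurable f P := (hf.mono hm).aestronglyMeasurable
  have hpull : ∫ ω, f ω * Y ω ∂P = ∫ ω, f ω * P[Y|m] ω ∂P := by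
    rw [← integral_condExp hm]
    exact integral_congr_ae (condExp_stronglyMeasurable_mul_of_bound hm hf hY M hfM')
  simp only [mul_sub]
  rw [integral_sub (integrable_condExp.bdd_mul hf' hfM')
    ((Integrable.of_bound hf' M hfM').mul_const _), integral_mul_const, ← hpull, cov]

lemma abs_cov_le_mul_condExpDeviation (hm : m ≤ mΩ) {f Y : Ω → ℝ}
    (hf : StronglyMeasurable[m] f) {M : ℝ} (hfM : ∀ ω, |f ω| ≤ M) (hY : Integrable Y P) :
    |cov P f Y| ≤ M * condExpDeviation P m Y := by
  have hdev : Integrable (fun ω => |P[Y|m] ω - ∫ ω', Y ω' ∂P|) P :=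
    (integrable_condExp.sub (integrable_const _)).abs
  rw [cov_eq_integral_mul_condExp_sub hm hf hfM hY, condExpDeviation, ← integral_const_mul]
  refine abs_integral_le_integral_abs.trans (integral_mono_of_nonneg
    (ae_of_all _ fun _ => abs_nonneg _) (hdev.const_mul M) (ae_of_all _ fun ω => ?_))
  dsimp only
  rw [abs_mul]
  exact mul_le_mul_of_nonneg_right (hfM ω) (abs_nonneg _)

/-- `F` is the sign of `ζ - 𝔼 Y`, where `P[Y|σ(φ)] = ζ ∘ φ` (Doob–Dynkin). -/
lemma exists_cov_comp_eq_condExpDeviation {E : Type*} [mE : MeasurableSpace E] {φ : Ω → E}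
    (hφ : Measurable φ) {Y : Ω → ℝ} (hY : Integrable Y P) :
    ∃ F : E → ℝ, Measurable F ∧ (∀ x, |F x| ≤ 1) ∧
      cov P (fun ω => F (φ ω)) Y = condExpDeviation P (mE.comap φ) Y := by
  obtain ⟨ζ, hζ, hζφ⟩ :=
    (stronglyMeasurable_condExp (m := mE.comap φ) (f := Y) (μ := P)).exists_eq_measurable_comp
  set c := ∫ ω, Y ω ∂P
  let F : E → ℝ := fun x => if ζ x < c then -1 else 1
  have hF : Measurable F :=
    Measurable.ite (measurableSet_lt hζ.measurable measurable_const) measurable_const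
      measurable_const
  have hF1 : ∀ x, |F x| ≤ 1 := fun x => by dsimp only [F]; split_ifs <;> norm_num
  refine ⟨F, hF, hF1, ?_⟩
  rw [cov_eq_integral_mul_condExp_sub (f := fun ω => F (φ ω)) hφ.comap_le
    (hF.comp (comap_measurable φ)).stronglyMeasurable (fun ω => hF1 (φ ω)) hY, condExpDeviation,
    hζφ]
  refine integral_congr_ae (ae_of_all _ fun ω => ?_)
  dsimp only [F, Function.comp_apply]
  split_ifs with hlt
  · rw [abs_of_neg (sub_neg.2 hlt)]; ring
  · rw [abs_of_nonneg (sub_nonneg.2 (not_lt.1 hlt))]; ring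

lemma condExpDeviation_le_add (Y : Ω → ℝ) :
    condExpDeviation P m₁ Y ≤ condExpDeviation P m₂ Y + ∫ ω, |P[Y|m₂] ω - P[Y|m₁] ω| ∂P := by
  rw [condExpDeviation, condExpDeviation, ← integral_add]
  · refine integral_mono (integrable_condExp.sub (integrable_const _)).abs
      ((integrable_condExp.sub (integrable_const _)).abs.add
        (integrable_condExp.sub integrable_condExp).abs) fun ω => ?_
    dsimp only
    linarith [abs_sub_le (P[Y|m₁] ω) (P[Y|m₂] ω) (∫ ω', Y ω' ∂P),
      abs_sub_comm (P[Y|m₁] ω) (P[Y|m₂] ω)]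
  · exact (integrable_condExp.sub (integrable_const _)).abs
  · exact (integrable_condExp.sub integrable_condExp).abs

end Covariance

section RandomField

variable {Ω I : Type*} {mΩ : MeasurableSpace Ω} {X : I → Ω → ℝ}

lemma sigmaOn_le (hmeas : ∀ i, Measurable (X i)) (S : Set I) : sigmaOn X S ≤ mΩ :=
  iSup₂_le fun i _ => (hmeas i).comap_le

lemma sigmaOn_mono {S T : Set I} (hST : S ⊆ T) : sigmaOn X S ≤ sigmaOn X T :=
  biSup_mono hST

lemma comap_pi_eq_sigmaOn_range {ι : Type*} (Γ : ι → I) :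
    MeasurableSpace.comap (fun ω i => X (Γ i) ω) MeasurableSpace.pi
      = sigmaOn X (Set.range Γ) := by
  simp_rw [MeasurableSpace.pi, MeasurableSpace.comap_iSup, MeasurableSpace.comap_comp,
    Function.comp_def, sigmaOn, iSup_range]

variable {P : Measure Ω} [IsFiniteMeasure P]

lemma abs_cov_comp_le_mul_condExpDeviation_sigmaOn {ι : Type*} (hmeas : ∀ i, Measurable (X i))
    {S : Set I} {Γ : ι → I} (hΓ : ∀ i, Γ i ∈ S) {F : (ι → ℝ) → ℝ} (hF : Measurable F) {M : ℝ}
    (hFM : ∀ x, |F x| ≤ M) {Y : Ω → ℝ} (hY : Integrable Y P) :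
    |cov P (fun ω => F (fun i => X (Γ i) ω)) Y| ≤ M * condExpDeviation P (sigmaOn X S) Y := by
  refine abs_cov_le_mul_condExpDeviation (sigmaOn_le hmeas S) ?_ (fun ω => hFM _) hY
  refine ((hF.comp (comap_measurable _)).mono ?_ le_rfl).stronglyMeasurable
  rw [comap_pi_eq_sigmaOn_range]
  exact sigmaOn_mono (Set.range_subset_iff.2 hΓ)

lemma abs_cov_comp_div_le_condExpDeviation_sigmaOn_inv_mul {ι : Type*}
    (hmeas : ∀ i, Measurable (X i)) {S : Set I} {Γ : ι → I} (hΓ : ∀ i, Γ i ∈ S)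
    {F : (ι → ℝ) → ℝ} (hF : Measurable F) {M : ℝ} (hFM : ∀ x, |F x| ≤ M) (hM : 0 < M) {L : ℝ}
    (hL : 0 < L) {Y : Ω → ℝ} (hY : Integrable Y P) :
    |cov P (fun ω => F (fun i => X (Γ i) ω)) Y| / (M * L)
      ≤ condExpDeviation P (sigmaOn X S) (fun ω => L⁻¹ * Y ω) := by
  have hle := abs_cov_comp_le_mul_condExpDeviation_sigmaOn hmeas hΓ hF hFM (hY.const_mul L⁻¹)
  rw [cov_const_mul_right, abs_mul, abs_of_pos (inv_pos.2 hL), inv_mul_le_iff₀ hL] at hle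
  rw [div_le_iff₀ (mul_pos hM hL)]
  linarith

lemma exists_finite_integral_abs_condExp_sigmaOn_sub_lt [Countable I]
    (hmeas : ∀ i, Measurable (X i)) (S : Set I) (Y : Ω → ℝ) {ε : ℝ} (hε : 0 < ε) :
    ∃ T ⊆ S, T.Finite ∧ ∫ ω, |P[Y|sigmaOn X T] ω - P[Y|sigmaOn X S] ω| ∂P < ε := by
  obtain ⟨ι, hι⟩ := Countable.exists_injective_nat I
  let T : ℕ → Set I := fun n => {i ∈ S | ι i < n}
  let ℱ : Filtration ℕ mΩ :=
    ⟨fun n => sigmaOn X (T n), fun a b hab => sigmaOn_mono fun i hi => ⟨hi.1, hi.2.trans_le hab⟩,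
      fun n => sigmaOn_le hmeas _⟩
  have hℱ : ⨆ n, ℱ n = sigmaOn X S :=
    le_antisymm (iSup_le fun n => sigmaOn_mono (Set.sep_subset _ _))
      (iSup₂_le fun i hi =>
        le_iSup_of_le (ι i + 1) (le_iSup₂_of_le i ⟨hi, Nat.lt_succ_self _⟩ le_rfl))
  have hlim := tendsto_eLpNorm_condExp (μ := P) (ℱ := ℱ) Y
  rw [hℱ] at hlim
  obtain ⟨n, hn⟩ := (hlim.eventually_lt_const (ENNReal.ofReal_pos.2 hε)).exists
  refine ⟨T n, Set.sep_subset _ _,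
    ((Set.finite_Iio n).preimage hι.injOn).subset fun i hi => hi.2, ?_⟩
  have hint : Integrable (P[Y|sigmaOn X (T n)] - P[Y|sigmaOn X S]) P :=
    integrable_condExp.sub integrable_condExp
  rw [← ENNReal.ofReal_lt_ofReal_iff hε]
  convert hn using 1
  rw [eLpNorm_one_eq_lintegral_enorm, ← ofReal_integral_norm_eq_lintegral_enorm hint]
  rfl

lemma exists_cov_ge_condExpDeviation_sigmaOn_sub [Countable I] (hmeas : ∀ i, Measurable (X i))
    (S : Set I) {Y : Ω → ℝ} (hY : Integrable Y P) {ε : ℝ} (hε : 0 < ε) :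
    ∃ (u : ℕ) (Γ : Fin u → I) (F : (Fin u → ℝ) → ℝ), Function.Injective Γ ∧ (∀ i, Γ i ∈ S) ∧
      Measurable F ∧ (∀ x, |F x| ≤ 1) ∧
      condExpDeviation P (sigmaOn X S) Y - ε ≤ cov P (fun ω => F (fun i => X (Γ i) ω)) Y := by
  obtain ⟨T, hTS, hT, hclose⟩ :=
    exists_finite_integral_abs_condExp_sigmaOn_sub_lt (P := P) hmeas S Y hε
  obtain ⟨u, Γ, hΓ, rfl⟩ := hT.fin_param
  obtain ⟨F, hF, hF1, hcov⟩ :=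
    exists_cov_comp_eq_condExpDeviation (P := P) (measurable_pi_lambda _ fun i => hmeas (Γ i)) hY
  rw [comap_pi_eq_sigmaOn_range] at hcov
  refine ⟨u, Γ, F, hΓ, fun i => hTS ⟨i, rfl⟩, hF, hF1, ?_⟩
  rw [hcov]
  linarith [condExpDeviation_le_add (P := P) (m₁ := sigmaOn X S) (m₂ := sigmaOn X (Set.range Γ))
    Y]

end RandomField

theorem thetaCoeff_eq_thetaMix_general
    {Ω : Type*} [MeasurableSpace Ω] (P : Measure Ω) [IsProbabilityMeasure P]
    {m : ℕ} (X : (Fin m → ℤ) → Ω → ℝ) (hmeas : ∀ t, Measurable (X t))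
    (h : ℕ) :
    thetaCoeff P X (h : ℝ) = thetaMix P X (h : ℝ) := by
  refine Real.sSup_eq_sSup_of_forall_exists_le_of_forall_exists_sub_le ?_ ?_
  · rintro _ ⟨u, j, Γ, F, G, MF, LG, -, hΓ, hF, hFM, hG, ⟨MG, hGM⟩, hGL, hMF, hLG, rfl⟩
    have hY : Integrable (fun ω => G (X j ω)) P :=
      .of_bound (hG.comp (hmeas j)).aestronglyMeasurable MG (ae_of_all _ fun ω => hGM _)
    refine ⟨_, ⟨j, fun x => LG⁻¹ * G x, fun x y => ?_, ⟨LG⁻¹ * MG, fun x => ?_⟩, rfl⟩,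
      abs_cov_comp_div_le_condExpDeviation_sigmaOn_inv_mul hmeas hΓ hF hFM hMF hLG hY⟩
    · rw [← mul_sub, abs_mul, abs_inv, abs_of_pos hLG, inv_mul_le_iff₀ hLG]
      exact hGL x y
    · rw [abs_mul, abs_inv, abs_of_pos hLG]
      exact mul_le_mul_of_nonneg_left (hGM x) (inv_nonneg.2 hLG.le)
  · rintro _ ⟨j, g, hgL, ⟨M, hgM⟩, rfl⟩ ε hε
    have hg : Measurable g := (LipschitzWith.of_dist_le_mul (K := 1) fun x y => by
      simpa [Real.dist_eq] using hgL x y).continuous.measurable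
    have hY : Integrable (fun ω => g (X j ω)) P :=
      .of_bound (hg.comp (hmeas j)).aestronglyMeasurable M (ae_of_all _ fun ω => hgM _)
    obtain ⟨u, Γ, F, hΓ, hΓS, hF, hF1, hcov⟩ :=
      exists_cov_ge_condExpDeviation_sigmaOn_sub hmeas (VSet j h) hY hε
    exact ⟨_, ⟨u, j, Γ, F, g, 1, 1, hΓ, hΓS, hF, hF1, hg, ⟨M, hgM⟩, by simpa using hgL, one_pos,
      one_pos, rfl⟩, by rw [mul_one, div_one]; exact hcov.trans (le_abs_self _)⟩

/-- Lemma 5.1: for a real-valued random field on `ℤ^m`, the θ-lex coefficient `θ(h)`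
coincides with the mixingale-type coefficient `θ_h` for every `h ∈ ℕ`. -/
theorem thetaCoeff_eq_thetaMix
    {Ω : Type*} [MeasurableSpace Ω] (P : Measure Ω) [IsProbabilityMeasure P]
    {m : ℕ} (X : (Fin m → ℤ) → Ω → ℝ) (hmeas : ∀ t, Measurable (X t))
    (h : ℕ) (hh : 1 ≤ h) :
    thetaCoeff P X (h : ℝ) = thetaMix P X (h : ℝ) :=
  thetaCoeff_eq_thetaMix_general P X hmeas h

end
end

section
/- Let X = (X_t)_{t in Z^m} be a stationary centered real-valued random field with E[|X_0|^{2+delta}] < infinity for some delta > 0, whose theta-lex coefficients satisfy theta(h) = O(h^{-alpha}) for some alpha > m(1 + 1/delta). Then the projective criterion of Dedecker holds: the sum over k in V_0 of | E[ X_k * E[X_0 | sigma(X_l : l in V_0^{||k||_infty})] ] | is finite. -/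
/-!
Since `X k` is measurable for `σ(X l : l ∈ V_0^{‖k‖})`, the `k`-th term is `|E[X_k X_0]|`.
Truncate both variables at level `T = ‖k‖ ^ (α / (1 + δ))`: the θ-lex bound controls the
covariance of the truncations by `c ‖k‖^{-α} T`, and the `(2+δ)`-th moment together with
centering controls everything the truncation discards by `O(T^{-δ})`. Both are
`O(‖k‖^{-αδ/(1+δ)})`, and `αδ/(1+δ) > m` is exactly what makes this summable over `ℤ^m`.
-/

open MeasureTheory Filter Topology

noncomputable section

/-- Strict stationarity of a random field indexed by `ℤ^m`. -/
def Stationary {Ω : Type*} [MeasurableSpace Ω] (P : Measure Ω) {m : ℕ}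
    (X : (Fin m → ℤ) → Ω → ℝ) : Prop :=
  ∀ (τ : Fin m → ℤ) (u : ℕ) (t : Fin u → (Fin m → ℤ)),
    Measure.map (fun ω (i : Fin u) => X (t i + τ) ω) P =
      Measure.map (fun ω (i : Fin u) => X (t i) ω) P

/-- `θ : ℝ → ℝ` is a family of θ-lex coefficients for the random field `X`. -/
def HasThetaLexBound {Ω : Type*} [MeasurableSpace Ω] (P : Measure Ω) {m : ℕ}
    (X : (Fin m → ℤ) → Ω → ℝ) (θ : ℝ → ℝ) : Prop :=
  ∀ (h : ℝ), 0 < h → ∀ (u : ℕ) (j : Fin m → ℤ) (Γ : Fin u → (Fin m → ℤ)),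
    Function.Injective Γ → (∀ i, Γ i ∈ VSet j h) →
    ∀ (F : (Fin u → ℝ) → ℝ) (G : ℝ → ℝ) (MF LG : ℝ),
      Measurable F → (∀ x, |F x| ≤ MF) →
      Measurable G → (∃ MG, ∀ x, |G x| ≤ MG) →
      (∀ x y, |G x - G y| ≤ LG * |x - y|) →
      |cov P (fun ω => F (fun i => X (Γ i) ω)) (fun ω => G (X j ω))| ≤ θ h * MF * LG

open ProbabilityTheory

def clip (T x : ℝ) : ℝ := max (-T) (min T x)

section Clip

variable {T : ℝ}

lemma abs_clip_le (hT : 0 ≤ T) (x : ℝ) : |clip T x| ≤ T := by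
  unfold clip; grind

lemma lipschitzWith_clip (T : ℝ) : LipschitzWith 1 (clip T) :=
  (LipschitzWith.id.const_min T).const_max (-T)

lemma measurable_clip (T : ℝ) : Measurable (clip T) :=
  (lipschitzWith_clip T).continuous.measurable

lemma clip_eq_self {x : ℝ} (h : |x| ≤ T) : clip T x = x := by
  unfold clip; grind

lemma abs_sub_clip_le_abs (hT : 0 ≤ T) (x : ℝ) : |x - clip T x| ≤ |x| := by
  unfold clip; grind

lemma abs_sub_clip_rpow_le {p q : ℝ} (hT : 0 < T) (hq : 0 < q) (hqp : q ≤ p) (x : ℝ) :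
    |x - clip T x| ^ q ≤ |x| ^ p * T ^ (q - p) := by
  rcases le_or_gt |x| T with h | h
  · rw [clip_eq_self h, sub_self, abs_zero, Real.zero_rpow hq.ne']
    positivity
  · have hx : 0 < |x| := hT.trans h
    calc |x - clip T x| ^ q ≤ |x| ^ q :=
          Real.rpow_le_rpow (abs_nonneg _) (abs_sub_clip_le_abs hT.le x) hq.le
      _ = |x| ^ p * |x| ^ (q - p) := by rw [← Real.rpow_add hx, add_sub_cancel]
      _ ≤ |x| ^ p * T ^ (q - p) :=
        mul_le_mul_of_nonneg_left (Real.rpow_le_rpow_of_nonpos hT h.le (by linarith))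
          (by positivity)

lemma abs_mul_sub_clip_mul_clip_le {p : ℝ} (hT : 0 < T) (hp : 2 ≤ p) (x y : ℝ) :
    |x * y - clip T x * clip T y| ≤ 3 / 2 * T ^ (2 - p) * (|x| ^ p + |y| ^ p) := by
  set a := x - clip T x
  set b := y - clip T y
  have hlin (z : ℝ) : T * |z - clip T z| ≤ |z| ^ p * T ^ (2 - p) := by
    have h := abs_sub_clip_rpow_le hT one_pos (by linarith) z
    rw [Real.rpow_one] at h
    have hT2 : T ^ (2 - p) = T * T ^ (1 - p) := by
      rw [show 2 - p = 1 + (1 - p) by ring, Real.rpow_add hT, Real.rpow_one]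
    rw [hT2, mul_left_comm]
    exact mul_le_mul_of_nonneg_left h hT.le
  have hsq (z : ℝ) : |z - clip T z| ^ 2 ≤ |z| ^ p * T ^ (2 - p) := by
    simpa [Real.rpow_two] using abs_sub_clip_rpow_le hT two_pos hp z
  have hsplit : x * y - clip T x * clip T y = clip T x * b + a * clip T y + a * b := by ring
  have h1 : |clip T x| * |b| ≤ T * |b| :=
    mul_le_mul_of_nonneg_right (abs_clip_le hT.le x) (abs_nonneg b)
  have h2 : |a| * |clip T y| ≤ T * |a| := by
    rw [mul_comm]; exact mul_le_mul_of_nonneg_right (abs_clip_le hT.le y) (abs_nonneg a)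
  have h3 : |a| * |b| ≤ (|a| ^ 2 + |b| ^ 2) / 2 := by nlinarith [sq_nonneg (|a| - |b|)]
  calc |x * y - clip T x * clip T y|
      ≤ |clip T x| * |b| + |a| * |clip T y| + |a| * |b| := by
        rw [hsplit, ← abs_mul, ← abs_mul, ← abs_mul]
        exact abs_add_three _ _ _
    _ ≤ 3 / 2 * T ^ (2 - p) * (|x| ^ p + |y| ^ p) := by
        linarith [hlin x, hlin y, hsq x, hsq y]

end Clip

section Truncation

variable {Ω : Type*} [MeasurableSpace Ω] {P : Measure Ω} [IsFiniteMeasure P]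
  {ξ η : Ω → ℝ} {p T M : ℝ}

lemma integrable_clip_comp (hT : 0 ≤ T) (hξ : Measurable ξ) :
    Integrable (fun ω => clip T (ξ ω)) P :=
  .of_bound ((measurable_clip T).comp hξ).aestronglyMeasurable T
    (ae_of_all _ fun _ => abs_clip_le hT _)

lemma abs_integral_clip_le (hT : 0 < T) (hp : 1 ≤ p) (hξ : Measurable ξ)
    (hξp : Integrable (fun ω => |ξ ω| ^ p) P) (hξM : ∫ ω, |ξ ω| ^ p ∂P ≤ M)
    (hξ0 : ∫ ω, ξ ω ∂P = 0) :
    |∫ ω, clip T (ξ ω) ∂P| ≤ M * T ^ (1 - p) := by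
  have hclip := integrable_clip_comp (P := P) hT.le hξ
  have hres_le (ω : Ω) : |ξ ω - clip T (ξ ω)| ≤ |ξ ω| ^ p * T ^ (1 - p) := by
    simpa using abs_sub_clip_rpow_le hT one_pos hp (ξ ω)
  have hres : Integrable (fun ω => ξ ω - clip T (ξ ω)) P :=
    (hξp.mul_const _).mono' (hξ.sub ((measurable_clip T).comp hξ)).aestronglyMeasurable
      (ae_of_all _ hres_le)
  have hsum := integral_add hres hclip
  simp only [sub_add_cancel, hξ0] at hsum
  calc |∫ ω, clip T (ξ ω) ∂P| = |∫ ω, ξ ω - clip T (ξ ω) ∂P| := by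
        rw [eq_neg_of_add_eq_zero_right hsum.symm, abs_neg]
    _ ≤ ∫ ω, |ξ ω - clip T (ξ ω)| ∂P := abs_integral_le_integral_abs
    _ ≤ ∫ ω, |ξ ω| ^ p * T ^ (1 - p) ∂P :=
        integral_mono hres.abs (hξp.mul_const _) hres_le
    _ ≤ M * T ^ (1 - p) := by
        rw [integral_mul_const]; exact mul_le_mul_of_nonneg_right hξM (by positivity)

theorem abs_integral_mul_le_abs_cov_clip_add (hT : 1 ≤ T) (hp : 2 ≤ p)
    (hξ : Measurable ξ) (hη : Measurable η)
    (hξp : Integrable (fun ω => |ξ ω| ^ p) P) (hηp : Integrable (fun ω => |η ω| ^ p) P)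
    (hξM : ∫ ω, |ξ ω| ^ p ∂P ≤ M) (hηM : ∫ ω, |η ω| ^ p ∂P ≤ M)
    (hξ0 : ∫ ω, ξ ω ∂P = 0) (hη0 : ∫ ω, η ω ∂P = 0) :
    |∫ ω, ξ ω * η ω ∂P| ≤
      |cov P (fun ω => clip T (ξ ω)) (fun ω => clip T (η ω))| + (M ^ 2 + 3 * M) * T ^ (2 - p) := by
  have hT0 : 0 < T := one_pos.trans_le hT
  set f := fun ω => clip T (ξ ω)
  set g := fun ω => clip T (η ω)
  have hM : 0 ≤ M := (integral_nonneg fun ω => by positivity).trans hξM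
  have hfg_meas : Measurable fun ω => f ω * g ω :=
    ((measurable_clip T).comp hξ).mul ((measurable_clip T).comp hη)
  have hfg : Integrable (fun ω => f ω * g ω) P :=
    .of_bound hfg_meas.aestronglyMeasurable
      (T * T) (ae_of_all _ fun ω => by
        rw [norm_mul]
        exact mul_le_mul (abs_clip_le hT0.le _) (abs_clip_le hT0.le _) (norm_nonneg _) hT0.le)
  have hres_le (ω : Ω) :
      |ξ ω * η ω - f ω * g ω| ≤ 3 / 2 * T ^ (2 - p) * (|ξ ω| ^ p + |η ω| ^ p) :=
    abs_mul_sub_clip_mul_clip_le hT0 hp (ξ ω) (η ω)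
  have hres : Integrable (fun ω => ξ ω * η ω - f ω * g ω) P :=
    ((hξp.add hηp).const_mul _).mono' ((hξ.mul hη).sub hfg_meas).aestronglyMeasurable
      (ae_of_all _ hres_le)
  have hres_int : ∫ ω, |ξ ω * η ω - f ω * g ω| ∂P ≤ 3 * M * T ^ (2 - p) :=
    calc ∫ ω, |ξ ω * η ω - f ω * g ω| ∂P
        ≤ ∫ ω, 3 / 2 * T ^ (2 - p) * (|ξ ω| ^ p + |η ω| ^ p) ∂P :=
          integral_mono hres.abs ((hξp.add hηp).const_mul _) hres_le
      _ ≤ 3 * M * T ^ (2 - p) := by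
          rw [integral_const_mul, integral_add hξp hηp]
          nlinarith [Real.rpow_nonneg hT0.le (2 - p)]
  have hmeans : |∫ ω, f ω ∂P| * |∫ ω, g ω ∂P| ≤ M ^ 2 * T ^ (2 - p) :=
    calc |∫ ω, f ω ∂P| * |∫ ω, g ω ∂P| ≤ (M * T ^ (1 - p)) * (M * T ^ (1 - p)) :=
          mul_le_mul (abs_integral_clip_le hT0 (by linarith) hξ hξp hξM hξ0)
            (abs_integral_clip_le hT0 (by linarith) hη hηp hηM hη0) (abs_nonneg _)
            (by positivity)
      _ = M ^ 2 * T ^ ((1 - p) + (1 - p)) := by rw [Real.rpow_add hT0]; ring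
      _ ≤ M ^ 2 * T ^ (2 - p) := by
          gcongr
          linarith
  have hsplit : ∫ ω, ξ ω * η ω ∂P =
      ∫ ω, ξ ω * η ω - f ω * g ω ∂P + (cov P f g + (∫ ω, f ω ∂P) * ∫ ω, g ω ∂P) := by
    rw [cov, sub_add_cancel, ← integral_add hres hfg]
    simp only [sub_add_cancel]
  rw [hsplit]
  calc _ ≤ |∫ ω, ξ ω * η ω - f ω * g ω ∂P| + (|cov P f g| + |∫ ω, f ω ∂P| * |∫ ω, g ω ∂P|) := by
        rw [← abs_mul]
        exact (abs_add_le _ _).trans (by gcongr; exact abs_add_le _ _)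
    _ ≤ _ := by
        have := (abs_integral_le_integral_abs (f := fun ω => ξ ω * η ω - f ω * g ω) (μ := P))
        linarith

end Truncation

lemma norm_intCast_pi {ι : Type*} [Fintype ι] (k : ι → ℤ) : ‖fun i => (k i : ℝ)‖ = ‖k‖ := by
  simp only [Pi.norm_def]
  congr 2

theorem summable_norm_rpow_intPi {ι : Type*} [Fintype ι] {r : ℝ} (hr : r < -Fintype.card ι) :
    Summable fun k : ι → ℤ => ‖k‖ ^ r := by
  classical
  set b := Pi.basisFun ℝ ι
  have hrank : Module.finrank ℤ (Submodule.span ℤ (Set.range b)) = Fintype.card ι := by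
    rw [ZLattice.rank ℝ]; simp
  have h := ZLattice.summable_norm_rpow (Submodule.span ℤ (Set.range b)) r (by rwa [hrank])
  rw [← ((b.restrictScalars ℤ).equivFun.symm.toEquiv).summable_iff] at h
  convert h using 2 with k
  rw [← norm_intCast_pi]
  congr 2
  ext i
  simp [Module.Basis.equivFun_symm_apply, b, Finset.sum_apply, Pi.basisFun_apply, Pi.single_apply]

lemma one_le_norm_of_ne_zero {ι : Type*} [Fintype ι] {k : ι → ℤ} (hk : k ≠ 0) : 1 ≤ ‖k‖ := by
  obtain ⟨i, hi⟩ := Function.ne_iff.mp hk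
  calc (1 : ℝ) ≤ ‖k i‖ := by rw [Int.norm_eq_abs]; exact_mod_cast Int.one_le_abs hi
    _ ≤ ‖k‖ := norm_le_pi_norm k i

lemma memLp_two_of_integrable_abs_rpow {Ω : Type*} [MeasurableSpace Ω] {P : Measure Ω}
    [IsFiniteMeasure P] {ξ : Ω → ℝ} {p : ℝ} (hp : 2 ≤ p) (hξ : AEStronglyMeasurable ξ P)
    (hξp : Integrable (fun ω => |ξ ω| ^ p) P) : MemLp ξ 2 P := by
  have h : MemLp ξ (ENNReal.ofReal p) P := by
    rw [← integrable_norm_rpow_iff hξ (by simp; linarith) ENNReal.ofReal_ne_top,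
      ENNReal.toReal_ofReal (by linarith)]
    exact hξp
  exact h.mono_exponent (by rw [← ENNReal.ofReal_ofNat]; exact ENNReal.ofReal_le_ofReal hp)

lemma integral_mul_condExp_of_stronglyMeasurable {Ω : Type*} {m m₀ : MeasurableSpace Ω}
    {μ : Measure Ω} (hm : m ≤ m₀) [SigmaFinite (μ.trim hm)] {f g : Ω → ℝ}
    (hf : StronglyMeasurable[m] f) (hfg : Integrable (f * g) μ) (hg : Integrable g μ) :
    ∫ ω, f ω * μ[g | m] ω ∂μ = ∫ ω, f ω * g ω ∂μ := by
  calc ∫ ω, f ω * μ[g | m] ω ∂μ = ∫ ω, μ[f * g | m] ω ∂μ :=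
        integral_congr_ae (condExp_mul_of_stronglyMeasurable_left hf hfg hg).symm
    _ = ∫ ω, f ω * g ω ∂μ := integral_condExp hm

lemma mem_VSet_zero_norm {m : ℕ} {k : Fin m → ℤ} (hk : lexLe k 0) : k ∈ VSet 0 ‖k‖ :=
  ⟨hk, by rw [zero_sub, norm_neg]⟩

section RandomField

variable {Ω : Type*} [MeasurableSpace Ω] {P : Measure Ω} {m : ℕ} {X : (Fin m → ℤ) → Ω → ℝ}

lemma sigmaOn_le_s11 (hmeas : ∀ t, Measurable (X t)) (S : Set (Fin m → ℤ)) :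
    sigmaOn X S ≤ ‹MeasurableSpace Ω› :=
  iSup₂_le fun s _ => (hmeas s).comap_le

lemma measurable_sigmaOn {S : Set (Fin m → ℤ)} {s : Fin m → ℤ} (hs : s ∈ S) :
    Measurable[sigmaOn X S] (X s) :=
  Measurable.of_comap_le (le_iSup₂ (f := fun s (_ : s ∈ S) =>
    MeasurableSpace.comap (X s) inferInstance) s hs)

lemma Stationary.map_eq_map_zero (hstat : Stationary P X) (hmeas : ∀ t, Measurable (X t))
    (t : Fin m → ℤ) : P.map (X t) = P.map (X 0) := by
  have h := congrArg (Measure.map fun v : Fin 1 → ℝ => v 0) (hstat t 1 fun _ => 0)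
  rwa [Measure.map_map (measurable_pi_apply 0) (measurable_pi_lambda _ fun _ => hmeas _),
    Measure.map_map (measurable_pi_apply 0) (measurable_pi_lambda _ fun _ => hmeas _),
    zero_add] at h

lemma Stationary.identDistrib (hstat : Stationary P X) (hmeas : ∀ t, Measurable (X t))
    (s t : Fin m → ℤ) : IdentDistrib (X s) (X t) P P :=
  ⟨(hmeas s).aemeasurable, (hmeas t).aemeasurable,
    (hstat.map_eq_map_zero hmeas s).trans (hstat.map_eq_map_zero hmeas t).symm⟩

lemma HasThetaLexBound.abs_cov_clip_le {θ : ℝ → ℝ} (hθ : HasThetaLexBound P X θ)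
    {h T : ℝ} (hh : 0 < h) (hT : 0 ≤ T) {j k : Fin m → ℤ} (hk : k ∈ VSet j h) :
    |cov P (fun ω => clip T (X k ω)) (fun ω => clip T (X j ω))| ≤ θ h * T := by
  simpa using hθ h hh 1 j (fun _ => k) (fun _ _ _ => Subsingleton.elim _ _) (fun _ => hk)
    (fun v => clip T (v 0)) (clip T) T 1 ((measurable_clip T).comp (measurable_pi_apply 0))
    (fun _ => abs_clip_le hT _) (measurable_clip T) ⟨T, abs_clip_le hT⟩
    (fun x y => by simpa [Real.dist_eq] using (lipschitzWith_clip T).dist_le_mul x y)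

variable [IsFiniteMeasure P]

lemma integral_mul_condExp_sigmaOn (hmeas : ∀ t, Measurable (X t))
    {S : Set (Fin m → ℤ)} {j k : Fin m → ℤ} (hk : k ∈ S) (hj2 : MemLp (X j) 2 P)
    (hk2 : MemLp (X k) 2 P) :
    ∫ ω, X k ω * P[X j | sigmaOn X S] ω ∂P = ∫ ω, X k ω * X j ω ∂P :=
  integral_mul_condExp_of_stronglyMeasurable (sigmaOn_le_s11 hmeas S)
    (measurable_sigmaOn hk).stronglyMeasurable (hk2.integrable_mul hj2)
    (hj2.integrable one_le_two)

theorem abs_integral_mul_le_of_hasThetaLexBound (hmeas : ∀ t, Measurable (X t))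
    (hstat : Stationary P X) (hcent : ∀ t, ∫ ω, X t ω ∂P = 0) {δ M : ℝ} (hδ : 0 < δ)
    (hmom : Integrable (fun ω => |X 0 ω| ^ (2 + δ)) P) (hM : ∫ ω, |X 0 ω| ^ (2 + δ) ∂P ≤ M)
    {c α : ℝ} (hα : 0 ≤ α) (hθ : HasThetaLexBound P X fun h => c * h ^ (-α))
    {k : Fin m → ℤ} (hk : lexLe k 0) (hk0 : k ≠ 0) :
    |∫ ω, X k ω * X 0 ω ∂P| ≤ (|c| + M ^ 2 + 3 * M) * ‖k‖ ^ (-(α * δ / (1 + δ))) := by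
  have hn : 1 ≤ ‖k‖ := one_le_norm_of_ne_zero hk0
  have hn0 : 0 < ‖k‖ := one_pos.trans_le hn
  set T := ‖k‖ ^ (α / (1 + δ))
  have hT : 1 ≤ T := Real.one_le_rpow hn (by positivity)
  have hdist := (hstat.identDistrib hmeas k 0).comp
    (u := fun x : ℝ => |x| ^ (2 + δ)) (by fun_prop)
  have hcov := hθ.abs_cov_clip_le hn0 (by linarith) (mem_VSet_zero_norm hk)
  have hcov_exp : ‖k‖ ^ (-α) * T = ‖k‖ ^ (-(α * δ / (1 + δ))) := by
    rw [← Real.rpow_add hn0]; congr 1; field_simp; ring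
  have htail_exp : T ^ (2 - (2 + δ)) = ‖k‖ ^ (-(α * δ / (1 + δ))) := by
    rw [← Real.rpow_mul hn0.le]; congr 1; field_simp; ring
  calc |∫ ω, X k ω * X 0 ω ∂P|
      ≤ |cov P (fun ω => clip T (X k ω)) (fun ω => clip T (X 0 ω))|
          + (M ^ 2 + 3 * M) * T ^ (2 - (2 + δ)) :=
        abs_integral_mul_le_abs_cov_clip_add hT (by linarith) (hmeas k) (hmeas 0)
          (hdist.integrable_iff.mpr hmom) hmom (hdist.integral_eq.trans_le hM) hM
          (hcent k) (hcent 0)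
    _ ≤ |c| * ‖k‖ ^ (-α) * T + (M ^ 2 + 3 * M) * T ^ (2 - (2 + δ)) := by
        gcongr
        exact hcov.trans (by gcongr; exact le_abs_self c)
    _ = (|c| + M ^ 2 + 3 * M) * ‖k‖ ^ (-(α * δ / (1 + δ))) := by
        rw [mul_assoc, hcov_exp, htail_exp]; ring

end RandomField

/-- If a stationary centered random field has a `(2+δ)`-th moment and θ-lex coefficients
of order `O(h^{-α})` with `α > m(1 + 1/δ)`, then Dedecker's projective criterion holds:
`∑_{k ∈ V_0} |E[X_k E[X_0 | σ(X_l : l ∈ V_0^{‖k‖_∞})]]| < ∞`. -/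
theorem projective_criterion_of_theta_decay
    {Ω : Type*} [MeasurableSpace Ω] (P : Measure Ω) [IsProbabilityMeasure P]
    {m : ℕ} (X : (Fin m → ℤ) → Ω → ℝ) (hmeas : ∀ t, Measurable (X t))
    (hstat : Stationary P X) (hcent : ∀ t, ∫ ω, X t ω ∂P = 0)
    (δ : ℝ) (hδ : 0 < δ) (hmom : Integrable (fun ω => |X 0 ω| ^ (2 + δ)) P)
    (α : ℝ) (hα : (m : ℝ) * (1 + 1 / δ) < α)
    (hθ : ∃ c : ℝ, HasThetaLexBound P X (fun h => c * h ^ (-α))) :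
    Summable (fun k : {k : Fin m → ℤ // lexLe k 0} =>
      |∫ ω, X (k : Fin m → ℤ) ω *
        MeasureTheory.condExp (sigmaOn X (VSet 0 ‖(k : Fin m → ℤ)‖)) P (X 0) ω ∂P|) := by
  obtain ⟨c, hc⟩ := hθ
  have hα0 : 0 ≤ α := (lt_of_le_of_lt (by positivity) hα).le
  have hβ : (m : ℝ) < α * δ / (1 + δ) := by
    rw [lt_div_iff₀ (by linarith)]
    calc (m : ℝ) * (1 + δ) = m * (1 + 1 / δ) * δ := by field_simp; ring
      _ < α * δ := by gcongr
  have hL2 (t : Fin m → ℤ) : MemLp (X t) 2 P :=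
    memLp_two_of_integrable_abs_rpow (by linarith) (hmeas t).aestronglyMeasurable
      (((hstat.identDistrib hmeas t 0).comp (u := fun x : ℝ => |x| ^ (2 + δ))
        (by fun_prop)).integrable_iff.mpr hmom)
  set M := ∫ ω, |X 0 ω| ^ (2 + δ) ∂P
  have hsum : Summable fun k : Fin m → ℤ => (|c| + M ^ 2 + 3 * M) * ‖k‖ ^ (-(α * δ / (1 + δ))) :=
    (summable_norm_rpow_intPi (by simpa using hβ)).mul_left _
  refine Summable.of_norm_bounded_eventually (hsum.comp_injective Subtype.val_injective) ?_
  filter_upwards [eventually_cofinite_ne ⟨0, Or.inr rfl⟩] with ⟨k, hk⟩ hk0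
  rw [Real.norm_eq_abs, abs_abs,
    integral_mul_condExp_sigmaOn hmeas (mem_VSet_zero_norm hk) (hL2 0) (hL2 k)]
  exact abs_integral_mul_le_of_hasThetaLexBound hmeas hstat hcent hδ hmom le_rfl hα0 hc hk
    (fun h => hk0 (Subtype.ext h))
end
end
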